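/- arXiv:2508.19408 — 6 statements merged into one kernel-verified Lean document; each statement's English description precedes it below -/
import Mathlib

section
/- Let a, d ∈ ℝ, b > 0, Ω_m > 0 and 0 < T ≤ π·b/Ω_m. Let g : ℝ → ℂ be continuous, and suppose the upchirped function g↑(t) = exp(i·a·t²/(2b))·g(t) is integrable on ℝ and its Fourier transform 𝓕g↑ vanishes at every ξ with |ξ| > Ω_m/(2π·b). Then for every t ∈ ℝ, g(t) = exp(−i·a·t²/(2b)) · Σ_{n∈ℤ} exp(i·a·(nT)²/(2b))·g(nT) · sinc((t − nT)/T), where sinc(x) = sin(π·x)/(π·x) for x ≠ 0 and sinc(0) = 1. -/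
/-- Normalized sinc: sinc(x) = sin(πx)/(πx) for x ≠ 0, sinc(0) = 1. -/
noncomputable def sinc (x : ℝ) : ℝ :=
  if x = 0 then 1 else Real.sin (Real.pi * x) / (Real.pi * x)

/-!
On the band `[-1/(2T), 1/(2T)]` the Fourier inversion formula writes `f t` as the pairing of
`ξ ↦ exp (2πitξ)` with `𝓕 f`. Extending both functions `1/T`-periodically, Parseval's identity on
the circle of length `1/T` turns this pairing into a series over the Fourier coefficients: those
of the exponential are sinc values, and those of `𝓕 f` are, by inversion again, the samples
`T · f (-nT)`. For the LCT-bandlimited signal one applies this to the upchirped `g↑`, and the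
chirp factors cancel.
-/

open MeasureTheory Set Complex FourierTransform
open scoped ComplexConjugate InnerProductSpace Real

namespace AddCircle

variable {p : ℝ} [hp : Fact (0 < p)]

theorem integral_liftIoc_haarAddCircle {E : Type*} [NormedAddCommGroup E] [NormedSpace ℝ E]
    (a : ℝ) (f : ℝ → E) :
    ∫ x, liftIoc p a f x ∂haarAddCircle = p⁻¹ • ∫ ξ in Ioc a (a + p), f ξ := by
  rw [integral_haarAddCircle, ← AddCircle.integral_preimage p a]
  congr 1
  exact setIntegral_congr_fun measurableSet_Ioc fun ξ hξ => liftIoc_coe_apply hξ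

theorem measurable_liftIoc {B : Type*} [MeasurableSpace B] (a : ℝ) {f : ℝ → B}
    (hf : Measurable f) : Measurable (liftIoc p a f) :=
  (hf.comp measurable_subtype_coe).comp (measurableEquivIoc p a).measurable

theorem memLp_liftIoc_of_continuous {E : Type*} [NormedAddCommGroup E] [MeasurableSpace E]
    [BorelSpace E] [SecondCountableTopology E] (a : ℝ) {f : ℝ → E}
    (hf : Continuous f) (q : ENNReal) : MemLp (liftIoc p a f) q haarAddCircle := by
  obtain ⟨C, hC⟩ := isCompact_Icc.exists_bound_of_continuousOn (s := Icc a (a + p)) hf.continuousOn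
  exact .of_bound (measurable_liftIoc a hf.measurable).aestronglyMeasurable C
    (ae_of_all _ fun x => hC _ (Ioc_subset_Icc_self (equivIoc p a x).2))

theorem hasSum_conj_fourierCoeff_mul_fourierCoeff {f g : AddCircle p → ℂ}
    (hf : MemLp f 2 haarAddCircle) (hg : MemLp g 2 haarAddCircle) :
    HasSum (fun n : ℤ => conj (fourierCoeff f n) * fourierCoeff g n)
      (∫ x, conj (f x) * g x ∂haarAddCircle) := by
  have coeff {u : AddCircle p → ℂ} (hu : MemLp u 2 haarAddCircle) (n : ℤ) :
      ⟪fourierBasis n, hu.toLp⟫_ℂ = fourierCoeff u n := by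
    rw [← fourierBasis.repr_apply_apply, fourierBasis_repr, fourierCoeff_congr_ae hu.coeFn_toLp]
  have h := fourierBasis.hasSum_inner_mul_inner hf.toLp hg.toLp
  rw [L2.inner_def] at h
  simp_rw [← inner_conj_symm hf.toLp, coeff] at h
  rwa [integral_congr_ae (g := fun x => conj (f x) * g x)] at h
  filter_upwards [hf.coeFn_toLp, hg.coeFn_toLp] with x hfx hgx
  rw [hfx, hgx, RCLike.inner_apply, mul_comm]

theorem fourierCoeff_liftIoc_eq_integral (a : ℝ) (f : ℝ → ℂ) (n : ℤ) :
    fourierCoeff (liftIoc p a f) n =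
      (p : ℂ)⁻¹ * ∫ ξ in Ioc a (a + p), exp (2 * π * I * (-n / p : ℝ) * ξ) * f ξ := by
  rw [fourierCoeff_liftIoc_eq, fourierCoeffOn_eq_integral, add_sub_cancel_left,
    intervalIntegral.integral_of_le (lt_add_of_pos_right a hp.out).le, real_smul, one_div,
    ofReal_inv]
  congr 1
  refine setIntegral_congr_fun measurableSet_Ioc fun ξ _ => ?_
  rw [fourier_coe_apply, smul_eq_mul]
  congr 2
  push_cast
  ring

end AddCircle

theorem sinc_neg (x : ℝ) : sinc (-x) = sinc x := by
  by_cases hx : x = 0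
  · simp [hx]
  · simp [sinc, hx, neg_div_neg_eq]

theorem Complex.exp_mul_I_sub_exp_neg_mul_I (y : ℂ) :
    exp (y * I) - exp (-y * I) = 2 * I * sin y := by
  linear_combination (-I) * two_sin y + (exp (y * I) - exp (-y * I)) * I_sq

theorem integral_Ioc_exp_eq_mul_sinc {p : ℝ} (hp : 0 < p) (x : ℝ) :
    ∫ ξ in Ioc (-(p / 2)) (p / 2), exp (2 * π * I * x * ξ) = p * sinc (p * x) := by
  rw [← intervalIntegral.integral_of_le (by linarith)]
  rcases eq_or_ne x 0 with rfl | hx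
  · simp [sinc]
  have hc : 2 * π * I * x ≠ 0 := by simp [Real.pi_ne_zero, hx]
  rw [integral_exp_mul_complex hc, sinc, if_neg (by positivity),
    show 2 * π * I * x * (p / 2 : ℝ) = (π * (p * x) : ℂ) * I by push_cast; ring,
    show 2 * π * I * x * (-(p / 2) : ℝ) = -(π * (p * x) : ℂ) * I by push_cast; ring,
    exp_mul_I_sub_exp_neg_mul_I]
  push_cast
  field_simp [ofReal_ne_zero.2 hp.ne']

theorem MeasureTheory.Integrable.continuous_fourier {E : Type*} [NormedAddCommGroup E]
    [NormedSpace ℂ E] {f : ℝ → E} (hf : Integrable f) : Continuous (𝓕 f) :=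
  VectorFourier.fourierIntegral_continuous Real.continuous_fourierChar
    (innerSL ℝ).continuous₂ hf

theorem eq_integral_Ioc_exp_mul_fourier {p : ℝ} {f : ℝ → ℂ} (hf : Continuous f)
    (hint : Integrable f) (hband : ∀ ξ : ℝ, p / 2 < |ξ| → 𝓕 f ξ = 0) (s : ℝ) :
    f s = ∫ ξ in Ioc (-(p / 2)) (p / 2), exp (2 * π * I * s * ξ) * 𝓕 f ξ := by
  have hout : ∀ ξ ∉ Icc (-(p / 2)) (p / 2), 𝓕 f ξ = 0 := fun ξ hξ =>
    hband ξ (not_le.mp (by rwa [abs_le, ← mem_Icc]))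
  have hFint : Integrable (𝓕 f) :=
    hint.continuous_fourier.integrable_of_hasCompactSupport (.intro isCompact_Icc hout)
  rw [← hint.fourierInv_fourier_eq hFint hf.continuousAt, Real.fourierInv_eq',
    ← integral_Icc_eq_integral_Ioc,
    setIntegral_eq_integral_of_forall_compl_eq_zero fun ξ hξ => by rw [hout ξ hξ, mul_zero]]
  congr 1 with ξ
  rw [smul_eq_mul, RCLike.inner_apply, conj_trivial]
  push_cast
  ring_nf

section Sampling

variable {p : ℝ} [hp : Fact (0 < p)]

theorem fourierCoeff_liftIoc_exp (t : ℝ) (n : ℤ) :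
    fourierCoeff (AddCircle.liftIoc p (-(p / 2)) fun ξ => exp (2 * π * I * (-t) * ξ)) n =
      sinc (p * t + n) := by
  have hexp (ξ : ℝ) : exp (2 * π * I * (-n / p : ℝ) * ξ) * exp (2 * π * I * (-t) * ξ) =
      exp (2 * π * I * (-n / p - t : ℝ) * ξ) := by
    rw [← exp_add]
    push_cast
    ring_nf
  rw [AddCircle.fourierCoeff_liftIoc_eq_integral, neg_add_eq_sub, sub_half,
    setIntegral_congr_fun measurableSet_Ioc fun ξ _ => hexp ξ,
    integral_Ioc_exp_eq_mul_sinc hp.out, ← mul_assoc,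
    inv_mul_cancel₀ (ofReal_ne_zero.2 hp.out.ne'), one_mul, ← sinc_neg]
  congr 2
  field_simp [hp.out.ne']
  ring

variable {f : ℝ → ℂ} (hf : Continuous f) (hint : Integrable f)
  (hband : ∀ ξ : ℝ, p / 2 < |ξ| → 𝓕 f ξ = 0)
include hf hint hband

theorem fourierCoeff_liftIoc_fourier (n : ℤ) :
    fourierCoeff (AddCircle.liftIoc p (-(p / 2)) (𝓕 f)) n = (p : ℂ)⁻¹ * f (-n / p) := by
  rw [AddCircle.fourierCoeff_liftIoc_eq_integral, neg_add_eq_sub, sub_half,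
    eq_integral_Ioc_exp_mul_fourier hf hint hband]

theorem integral_conj_liftIoc_exp_mul_liftIoc_fourier (t : ℝ) :
    ∫ x, conj (AddCircle.liftIoc p (-(p / 2)) (fun ξ => exp (2 * π * I * (-t) * ξ)) x) *
      AddCircle.liftIoc p (-(p / 2)) (𝓕 f) x ∂AddCircle.haarAddCircle = (p : ℂ)⁻¹ * f t := by
  change ∫ x, AddCircle.liftIoc p (-(p / 2))
    (fun ξ => conj (exp (2 * π * I * (-t) * ξ)) * 𝓕 f ξ) x ∂AddCircle.haarAddCircle = _
  rw [AddCircle.integral_liftIoc_haarAddCircle, neg_add_eq_sub, sub_half,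
    eq_integral_Ioc_exp_mul_fourier hf hint hband t, real_smul, ofReal_inv]
  congr 2 with ξ
  rw [← exp_conj]
  congr 2
  simp only [map_mul, map_neg, map_ofNat, conj_ofReal, conj_I]
  ring

theorem hasSum_sinc_mul_apply_neg_div_of_fourier_eq_zero (t : ℝ) :
    HasSum (fun n : ℤ => sinc (p * t + n) * f (-n / p)) (f t) := by
  have key := AddCircle.hasSum_conj_fourierCoeff_mul_fourierCoeff
    (AddCircle.memLp_liftIoc_of_continuous (p := p) (-(p / 2))
      (f := fun ξ => exp (2 * π * I * (-t) * ξ)) (by fun_prop) 2)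
    (AddCircle.memLp_liftIoc_of_continuous (-(p / 2)) hint.continuous_fourier 2)
  simp only [fourierCoeff_liftIoc_exp, fourierCoeff_liftIoc_fourier hf hint hband,
    integral_conj_liftIoc_exp_mul_liftIoc_fourier hf hint hband, conj_ofReal] at key
  have hp' : (p : ℂ) ≠ 0 := ofReal_ne_zero.2 hp.out.ne'
  rw [← mul_inv_cancel_left₀ hp' (f t)]
  refine (key.mul_left (p : ℂ)).congr_fun fun n => ?_
  rw [mul_left_comm, mul_inv_cancel_left₀ hp']

end Sampling

theorem hasSum_apply_mul_sinc_of_fourier_eq_zero {f : ℝ → ℂ} (hf : Continuous f)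
    (hint : Integrable f) {T : ℝ} (hT : 0 < T)
    (hband : ∀ ξ : ℝ, 1 / (2 * T) < |ξ| → 𝓕 f ξ = 0) (t : ℝ) :
    HasSum (fun n : ℤ => f (n * T) * sinc ((t - n * T) / T)) (f t) := by
  have : Fact (0 < T⁻¹) := ⟨inv_pos.2 hT⟩
  have key := hasSum_sinc_mul_apply_neg_div_of_fourier_eq_zero hf hint
    (fun ξ hξ => hband ξ (by rwa [one_div, mul_inv, mul_comm, ← div_eq_mul_inv])) t
  refine (Equiv.neg ℤ).hasSum_iff.mp (key.congr_fun fun n => ?_)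
  simp only [Function.comp_apply, Equiv.neg_apply, Int.cast_neg]
  field_simp
  ring_nf

theorem stmt3_general (a b Ωm T : ℝ) (hb : 0 < b) (hΩ : 0 < Ωm) (hT : 0 < T)
    (hTle : T ≤ Real.pi * b / Ωm)
    (g : ℝ → ℂ) (hg : Continuous g)
    (gup : ℝ → ℂ)
    (hgup : ∀ t : ℝ, gup t = Complex.exp (Complex.I * a * t ^ 2 / (2 * b)) * g t)
    (hint : MeasureTheory.Integrable gup)
    (hband : ∀ ξ : ℝ, Ωm / (2 * Real.pi * b) < |ξ| → FourierTransform.fourier gup ξ = 0) :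
    ∀ t : ℝ, g t = Complex.exp (-Complex.I * a * t ^ 2 / (2 * b)) *
      ∑' n : ℤ, Complex.exp (Complex.I * a * ((n : ℝ) * T) ^ 2 / (2 * b)) *
        g ((n : ℝ) * T) * (sinc ((t - (n : ℝ) * T) / T) : ℝ) := by
  intro t
  have hcont : Continuous gup := by
    rw [funext hgup]
    fun_prop
  have hrate : Ωm / (2 * π * b) ≤ 1 / (2 * T) := by
    rw [div_le_div_iff₀ (by positivity) (by positivity)]
    nlinarith [(le_div_iff₀ hΩ).1 hTle]
  have hsum := hasSum_apply_mul_sinc_of_fourier_eq_zero hcont hint hT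
    (fun ξ hξ => hband ξ (hrate.trans_lt hξ)) t
  have hsample (n : ℤ) : exp (I * a * ((n : ℝ) * T) ^ 2 / (2 * b)) * g (n * T) = gup (n * T) := by
    rw [hgup]
    push_cast
    rfl
  simp_rw [hsample, hsum.tsum_eq, hgup t, ← mul_assoc, ← exp_add, neg_mul, neg_div,
    neg_add_cancel, exp_zero, one_mul]

/-- Sampling theorem (Theorem 1) for LCT-bandlimited signals: chirp-modulated
sinc interpolation recovers g from its samples at rate T ≤ πb/Ωm. -/
theorem stmt3 (a d b Ωm T : ℝ) (hb : 0 < b) (hΩ : 0 < Ωm) (hT : 0 < T)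
    (hTle : T ≤ Real.pi * b / Ωm)
    (g : ℝ → ℂ) (hg : Continuous g)
    (gup : ℝ → ℂ)
    (hgup : ∀ t : ℝ, gup t = Complex.exp (Complex.I * a * t ^ 2 / (2 * b)) * g t)
    (hint : MeasureTheory.Integrable gup)
    (hband : ∀ ξ : ℝ, Ωm / (2 * Real.pi * b) < |ξ| → FourierTransform.fourier gup ξ = 0) :
    ∀ t : ℝ, g t = Complex.exp (-Complex.I * a * t ^ 2 / (2 * b)) *
      ∑' n : ℤ, Complex.exp (Complex.I * a * ((n : ℝ) * T) ^ 2 / (2 * b)) *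
        g ((n : ℝ) * T) * (sinc ((t - (n : ℝ) * T) / T) : ℝ) :=
  stmt3_general a b Ωm T hb hΩ hT hTle g hg gup hgup hint hband
end

section
/- Let a, d ∈ ℝ and b > 0, and let g : ℝ → ℂ be continuous and integrable. Define L_Λg(ω) = (1/√(i·2πb)) · ∫_ℝ g(t)·exp(i·(a·t² − 2·t·ω + d·ω²)/(2b)) dt, and assume L_Λg is integrable on ℝ. Then for every t ∈ ℝ, g(t) = (1/√(−i·2πb)) · ∫_ℝ L_Λg(ω)·exp(−i·(a·t² − 2·t·ω + d·ω²)/(2b)) dω; that is, the inverse LCT (which is itself an LCT, with parameter matrix Λ⁻¹) recovers g from L_Λg. -/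
/-!
Multiplying by the chirp `exp (i a t² / (2b))` turns the LCT into a rescaled Fourier transform:
`L_Λ g ω = C⁻¹ · exp (i d ω² / (2b)) · 𝓕 h (ω / (2πb))` with `h t = exp (i a t² / (2b)) g t` and
`C = √(2πb) e^{iπ/4}`. The chirps have modulus one, so `h` and `𝓕 h` are integrable, and the
Fourier inversion formula for `h`, after the substitution `ξ = ω / (2πb)`, gives back `g` up to the
factor `2πb = √(2πb) e^{-iπ/4} · C`.
-/

open MeasureTheory Complex FourierTransform

noncomputable def chirp (c x : ℝ) : ℂ := exp (↑(c * x ^ 2) * I)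

theorem norm_chirp (c x : ℝ) : ‖chirp c x‖ = 1 := norm_exp_ofReal_mul_I _

@[fun_prop]
theorem continuous_chirp (c : ℝ) : Continuous (chirp c) := by
  unfold chirp; fun_prop

theorem chirp_neg_mul_chirp (c x : ℝ) : chirp (-c) x * chirp c x = 1 := by
  rw [chirp, chirp, ← exp_add]; push_cast; ring_nf; exact exp_zero

theorem integrable_chirp_mul_iff {c : ℝ} {f : ℝ → ℂ} :
    Integrable (fun x ↦ chirp c x * f x) ↔ Integrable f := by
  have bdd (c' : ℝ) {F : ℝ → ℂ} (hF : Integrable F) : Integrable (fun x ↦ chirp c' x * F x) :=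
    hF.bdd_mul (continuous_chirp c').aestronglyMeasurable
      (.of_forall fun x ↦ (norm_chirp c' x).le)
  refine ⟨fun h ↦ ?_, bdd c⟩
  simpa [← mul_assoc, chirp_neg_mul_chirp] using bdd (-c) h

theorem lct_kernel_eq (a b d t ω : ℝ) :
    exp (I * (a * t ^ 2 - 2 * t * ω + d * ω ^ 2) / (2 * b)) =
      chirp (d / (2 * b)) ω *
        (exp (↑(-2 * Real.pi * t * (ω / (2 * Real.pi * b))) * I) * chirp (a / (2 * b)) t) := by
  simp only [chirp, ← exp_add]
  congr 1
  push_cast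
  field_simp
  ring

theorem chirp_mul_inverse_lct_kernel (a b d t ω : ℝ) :
    chirp (d / (2 * b)) ω * exp (-I * (a * t ^ 2 - 2 * t * ω + d * ω ^ 2) / (2 * b)) =
      chirp (-(a / (2 * b))) t * exp (↑(2 * Real.pi * (ω / (2 * Real.pi * b) * t)) * I) := by
  simp only [chirp, ← exp_add]
  congr 1
  push_cast
  field_simp
  ring

theorem integral_mul_lct_kernel (g : ℝ → ℂ) (a b d ω : ℝ) :
    ∫ t, g t * exp (I * (a * t ^ 2 - 2 * t * ω + d * ω ^ 2) / (2 * b)) =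
      chirp (d / (2 * b)) ω * 𝓕 (fun t ↦ chirp (a / (2 * b)) t * g t) (ω / (2 * Real.pi * b)) := by
  rw [Real.fourier_real_eq_integral_exp_smul, ← integral_const_mul]
  congr 1 with t
  rw [lct_kernel_eq, smul_eq_mul]
  ring

theorem integral_exp_mul_fourier_comp_div {h : ℝ → ℂ} (hc : Continuous h) (hi : Integrable h)
    (hFi : Integrable (𝓕 h)) (r t : ℝ) :
    ∫ ω, exp (↑(2 * Real.pi * (ω / r * t)) * I) * 𝓕 h (ω / r) = |r| * h t := by
  rw [Measure.integral_comp_div (fun ξ ↦ exp (↑(2 * Real.pi * (ξ * t)) * I) * 𝓕 h ξ), real_smul]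
  congr 1
  rw [← congrFun (hc.fourierInv_fourier_eq hi hFi) t, Real.fourierInv_eq']
  congr 1 with ξ
  simp [mul_comm ξ t]

theorem sqrt_mul_exp_neg_mul_sqrt_mul_exp {r : ℝ} (hr : 0 ≤ r) (z : ℂ) :
    (Real.sqrt r * exp (-z)) * (Real.sqrt r * exp z) = r := by
  rw [mul_mul_mul_comm, ← exp_add, neg_add_cancel, exp_zero, mul_one, ← ofReal_mul,
    Real.mul_self_sqrt hr]

/-- LCT inversion formula: for continuous integrable g with integrable LCT,
the inverse LCT recovers g pointwise. Here √(i·2πb) = √(2πb)·e^{iπ/4} and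
√(−i·2πb) = √(2πb)·e^{−iπ/4} for b > 0. -/
theorem stmt5 (a d b : ℝ) (hb : 0 < b) (g : ℝ → ℂ)
    (hgc : Continuous g) (hgi : Integrable g)
    (Lg : ℝ → ℂ)
    (hLg : ∀ ω : ℝ, Lg ω =
      (1 / ((Real.sqrt (2 * Real.pi * b) : ℂ) * Complex.exp (Complex.I * Real.pi / 4))) *
        ∫ t : ℝ, g t * Complex.exp (Complex.I * (a * t ^ 2 - 2 * t * ω + d * ω ^ 2) / (2 * b)))
    (hLgi : Integrable Lg) :
    ∀ t : ℝ, g t =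
      (1 / ((Real.sqrt (2 * Real.pi * b) : ℂ) * Complex.exp (-Complex.I * Real.pi / 4))) *
        ∫ ω : ℝ, Lg ω * Complex.exp (-Complex.I * (a * t ^ 2 - 2 * t * ω + d * ω ^ 2) / (2 * b)) := by
  intro t
  have hr : 0 < 2 * Real.pi * b := by positivity
  set C : ℂ := Real.sqrt (2 * Real.pi * b) * exp (I * Real.pi / 4)
  set h := fun s ↦ chirp (a / (2 * b)) s * g s
  have hLg_fourier : ∀ ω, Lg ω = C⁻¹ * (chirp (d / (2 * b)) ω * 𝓕 h (ω / (2 * Real.pi * b))) := by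
    intro ω; rw [hLg, integral_mul_lct_kernel, one_div]
  have hC : C ≠ 0 := by simp [C, hr.le, hr.ne']
  have hFi : Integrable (𝓕 h) := by
    rw [← integrable_comp_div_iff _ hr.ne', ← integrable_chirp_mul_iff (c := d / (2 * b)),
      ← integrable_const_mul_iff (isUnit_iff_ne_zero.2 (inv_ne_zero hC))]
    simpa only [← hLg_fourier] using hLgi
  have hinverse : ∫ ω, Lg ω * exp (-I * (a * t ^ 2 - 2 * t * ω + d * ω ^ 2) / (2 * b)) =
      C⁻¹ * chirp (-(a / (2 * b))) t * (|2 * Real.pi * b| * h t) := by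
    rw [← integral_exp_mul_fourier_comp_div (by fun_prop) (integrable_chirp_mul_iff.2 hgi) hFi,
      ← integral_const_mul]
    congr 1 with ω
    rw [hLg_fourier]
    linear_combination C⁻¹ * 𝓕 h (ω / (2 * Real.pi * b)) * chirp_mul_inverse_lct_kernel a b d t ω
  have hC' : (Real.sqrt (2 * Real.pi * b) : ℂ) * exp (-(I * Real.pi / 4)) ≠ 0 := by
    simp [hr.le, hr.ne']
  rw [hinverse, abs_of_pos hr, neg_mul, neg_div,
    ← sqrt_mul_exp_neg_mul_sqrt_mul_exp hr.le (I * Real.pi / 4)]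
  field_simp
  linear_combination -C * g t * chirp_neg_mul_chirp (a / (2 * b)) t
end

section
/- Let a, d ∈ ℝ, b > 0, T > 0. Let f, g : ℤ → ℂ be absolutely summable sequences, and let m(n) = exp(i·a·(nT)²/(2b)) denote the discrete chirp. Define the LCT convolution h(n) = (1/√(i·2πb))·conj(m(n))·Σ_{k∈ℤ} m(k)·f(k)·m(n−k)·g(n−k). For any absolutely summable sequence s : ℤ → ℂ define its discrete-time LCT as Ŝ(ω) = (T/√(i·2πb))·Σ_{n∈ℤ} s(n)·exp(i·(a·(nT)² − 2·nT·ω + d·ω²)/(2b)). Then for every ω ∈ ℝ, Ĥ(ω) = (exp(−i·d·ω²/(2b))/T)·F̂(ω)·Ĝ(ω), where F̂, Ĝ, Ĥ are the discrete-time LCTs of f, g, h respectively. -/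
/-- Discrete-time LCT of a sequence s : ℤ → ℂ with parameters a, d, b (b > 0)
and sampling period T; here √(i·2πb) = √(2πb)·e^{iπ/4}. -/
noncomputable def dtlct (a d b T : ℝ) (s : ℤ → ℂ) (ω : ℝ) : ℂ :=
  ((T : ℂ) / ((Real.sqrt (2 * Real.pi * b) : ℂ) * Complex.exp (Complex.I * Real.pi / 4))) *
    ∑' n : ℤ, s n *
      Complex.exp (Complex.I *
        (a * ((n : ℝ) * T) ^ 2 - 2 * ((n : ℝ) * T) * ω + d * ω ^ 2) / (2 * b))

/-!
Absolute summability lets the double sum defining the transform of the chirp convolution be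
reindexed by `(n, k) ↦ (k, n - k)`. The chirp weights then split the transform kernel, because
the phases satisfy
`-a (nT)² + a (kT)² + a ((n-k)T)² + [a (nT)² - 2nTω + dω²]
  = -dω² + [a (kT)² - 2kTω + dω²] + [a ((n-k)T)² - 2(n-k)Tω + dω²]`,
so the double sum factors as a Cauchy product of the transforms of `f` and `g`.
-/

open Complex

theorem tsum_mul_tsum_eq_tsum_tsum_sub {G R : Type*} [AddCommGroup G] [NormedRing R]
    [CompleteSpace R] {f g : G → R} (hf : Summable fun k => ‖f k‖)
    (hg : Summable fun k => ‖g k‖) :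
    (∑' k, f k) * (∑' k, g k) = ∑' n, ∑' k, f k * g (n - k) := by
  let e : G × G ≃ G × G :=
    ⟨fun p => (p.2, p.1 - p.2), fun q => (q.1 + q.2, q.1), fun p => by simp, fun q => by simp⟩
  have hsum : Summable fun p : G × G => f p.2 * g (p.1 - p.2) :=
    e.summable_iff.mpr (summable_mul_of_summable_norm hf hg)
  rw [tsum_mul_tsum_of_summable_norm hf hg, ← e.tsum_eq]
  exact hsum.tsum_prod' hsum.prod_factor

noncomputable def dtChirp (a b T : ℝ) (n : ℤ) : ℂ :=
  exp (I * a * ((n : ℝ) * T) ^ 2 / (2 * b))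

noncomputable def dtlctKernel (a d b T ω : ℝ) (n : ℤ) : ℂ :=
  exp (I * (a * ((n : ℝ) * T) ^ 2 - 2 * ((n : ℝ) * T) * ω + d * ω ^ 2) / (2 * b))

section

variable (a d b T ω : ℝ)

theorem dtlct_eq_tsum (s : ℤ → ℂ) :
    dtlct a d b T s ω =
      T / ((Real.sqrt (2 * Real.pi * b) : ℂ) * exp (I * Real.pi / 4)) *
        ∑' n, s n * dtlctKernel a d b T ω n :=
  rfl

theorem norm_dtlctKernel (n : ℤ) : ‖dtlctKernel a d b T ω n‖ = 1 := by
  rw [dtlctKernel, ← norm_exp_I_mul_ofReal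
    ((a * ((n : ℝ) * T) ^ 2 - 2 * ((n : ℝ) * T) * ω + d * ω ^ 2) / (2 * b))]
  push_cast
  ring_nf

theorem summable_norm_mul_dtlctKernel {s : ℤ → ℂ} (hs : Summable fun n => ‖s n‖) :
    Summable fun n => ‖s n * dtlctKernel a d b T ω n‖ := by
  simpa only [norm_mul, norm_dtlctKernel, mul_one] using hs

theorem conj_dtChirp (n : ℤ) :
    starRingEnd ℂ (dtChirp a b T n) = exp (-(I * a * ((n : ℝ) * T) ^ 2 / (2 * b))) := by
  rw [dtChirp, ← exp_conj]
  congr 1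
  simp only [map_div₀, map_mul, map_pow, conj_I, conj_ofReal, map_ofNat]
  ring

theorem conj_dtChirp_mul_dtChirp_mul_dtChirp_mul_dtlctKernel (n k : ℤ) :
    starRingEnd ℂ (dtChirp a b T n) * dtChirp a b T k * dtChirp a b T (n - k) *
        dtlctKernel a d b T ω n =
      exp (-I * d * ω ^ 2 / (2 * b)) * dtlctKernel a d b T ω k *
        dtlctKernel a d b T ω (n - k) := by
  rw [conj_dtChirp]
  simp only [dtChirp, dtlctKernel, ← exp_add]
  congr 1
  push_cast
  ring

end

theorem stmt6_general (a d b T : ℝ)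
    (f g : ℤ → ℂ) (hf : Summable fun n => ‖f n‖) (hg : Summable fun n => ‖g n‖)
    (m : ℤ → ℂ)
    (hm : ∀ n : ℤ, m n = Complex.exp (Complex.I * a * ((n : ℝ) * T) ^ 2 / (2 * b)))
    (hconv : ℤ → ℂ)
    (hh : ∀ n : ℤ, hconv n =
      (1 / ((Real.sqrt (2 * Real.pi * b) : ℂ) * Complex.exp (Complex.I * Real.pi / 4))) *
        (starRingEnd ℂ) (m n) * ∑' k : ℤ, m k * f k * m (n - k) * g (n - k)) :
    ∀ ω : ℝ, dtlct a d b T hconv ω =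
      (Complex.exp (-Complex.I * d * ω ^ 2 / (2 * b)) / (T : ℂ)) *
        dtlct a d b T f ω * dtlct a d b T g ω := by
  intro ω
  obtain rfl : m = dtChirp a b T := funext hm
  set c : ℂ := (Real.sqrt (2 * Real.pi * b) : ℂ) * exp (I * Real.pi / 4)
  set e : ℂ := exp (-I * d * ω ^ 2 / (2 * b))
  set K := dtlctKernel a d b T ω
  have hterm (n : ℤ) :
      hconv n * K n = c⁻¹ * e * ∑' k, f k * K k * (g (n - k) * K (n - k)) := by
    rw [hh n, one_div, ← tsum_mul_left, ← tsum_mul_left, ← tsum_mul_right]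
    congr 1
    funext k
    linear_combination c⁻¹ * f k * g (n - k) *
      conj_dtChirp_mul_dtChirp_mul_dtChirp_mul_dtlctKernel a d b T ω n k
  rw [dtlct_eq_tsum, dtlct_eq_tsum, dtlct_eq_tsum, tsum_congr hterm, tsum_mul_left,
    ← tsum_mul_tsum_eq_tsum_tsum_sub (summable_norm_mul_dtlctKernel a d b T ω hf)
      (summable_norm_mul_dtlctKernel a d b T ω hg)]
  linear_combination e * c⁻¹ * c⁻¹ * (∑' k, f k * K k) * (∑' k, g k * K k) *
    (mul_self_mul_inv (T : ℂ)).symm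

/-- LCT convolution–product theorem for the discrete-time LCT: the chirp-twisted
convolution of two absolutely summable sequences maps to a chirp-weighted product
of their discrete-time LCTs. -/
theorem stmt6 (a d b T : ℝ) (hb : 0 < b) (hT : 0 < T)
    (f g : ℤ → ℂ) (hf : Summable fun n => ‖f n‖) (hg : Summable fun n => ‖g n‖)
    (m : ℤ → ℂ)
    (hm : ∀ n : ℤ, m n = Complex.exp (Complex.I * a * ((n : ℝ) * T) ^ 2 / (2 * b)))
    (hconv : ℤ → ℂ)
    (hh : ∀ n : ℤ, hconv n =
      (1 / ((Real.sqrt (2 * Real.pi * b) : ℂ) * Complex.exp (Complex.I * Real.pi / 4))) *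
        (starRingEnd ℂ) (m n) * ∑' k : ℤ, m k * f k * m (n - k) * g (n - k)) :
    ∀ ω : ℝ, dtlct a d b T hconv ω =
      (Complex.exp (-Complex.I * d * ω ^ 2 / (2 * b)) / (T : ℂ)) *
        dtlct a d b T f ω * dtlct a d b T g ω :=
  stmt6_general a d b T f g hf hg m hm hconv hh
end

section
/- Let h ∈ (0,1), let u : ℤ → ℝ satisfy |u(n)| ≤ 1 for all n ∈ ℤ, and let φ : ℝ → ℝ be continuously differentiable with compact support. Then for every x ∈ ℝ, |h · Σ_{n∈ℤ} (u(n) − u(n−1))·φ(x − n·h)| ≤ h · ∫_ℝ |φ′(y)| dy. -/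
/-!
Abel summation turns the sum into `∑ u n * (φ (x - n h) - φ (x - (n + 1) h))` (only finitely
many samples of `φ` are nonzero). Each increment is at most `∫ |φ'|` over the grid cell
`(x - (n + 1) h, x - n h]`, and these cells tile `ℝ`, so with `|u n| ≤ 1` the sum is at most
`∫ |φ'|`.
-/

open MeasureTheory Set

theorem HasCompactSupport.hasFiniteSupport_comp_sub_intCast_mul {M : Type*} [Zero M] {f : ℝ → M}
    (hf : HasCompactSupport f) (x : ℝ) {h : ℝ} (hh : h ≠ 0) :
    Function.HasFiniteSupport fun n : ℤ => f (x - n * h) := by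
  have hemb : Topology.IsClosedEmbedding fun n : ℤ => x - n * h :=
    ((Homeomorph.subLeft x).isClosedEmbedding.comp
      (Homeomorph.mulRight₀ h hh).isClosedEmbedding).comp Int.isClosedEmbedding_coe_real
  exact (hf.comp_isClosedEmbedding hemb).isCompact.finite_of_discrete.subset (subset_tsupport _)

theorem tsum_sub_mul_eq_tsum_mul_sub {R : Type*} [Ring R] [TopologicalSpace R]
    [IsTopologicalAddGroup R] [T2Space R] (u g : ℤ → R) (hg : Function.HasFiniteSupport g) :
    ∑' n, (u n - u (n - 1)) * g n = ∑' n, u n * (g n - g (n + 1)) := by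
  have hsum : ∀ v : ℤ → R, Summable fun n => v n * g n := fun v =>
    summable_of_hasFiniteSupport (hg.mul_right v)
  have hshift : Summable fun n => u n * g (n + 1) :=
    (Equiv.addRight (1 : ℤ)).summable_iff.mpr (hsum fun n => u (n - 1)) |>.congr fun n => by simp
  calc ∑' n, (u n - u (n - 1)) * g n = ∑' n, u n * g n - ∑' n, u (n - 1) * g n := by
        simp_rw [sub_mul]; exact (hsum u).tsum_sub (hsum _)
    _ = ∑' n, u n * g n - ∑' n, u n * g (n + 1) := by
        rw [← (Equiv.addRight (1 : ℤ)).tsum_eq fun n => u (n - 1) * g n]; simp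
    _ = ∑' n, u n * (g n - g (n + 1)) := by
        simp_rw [mul_sub]; exact ((hsum u).tsum_sub hshift).symm

theorem abs_sub_le_integral_Ioc_abs_deriv {f : ℝ → ℝ} {a b : ℝ} (hab : a ≤ b)
    (hf : ∀ y ∈ uIcc a b, DifferentiableAt ℝ f y) (hf' : IntervalIntegrable (deriv f) volume a b) :
    |f b - f a| ≤ ∫ y in Ioc a b, |deriv f y| := by
  rw [← intervalIntegral.integral_deriv_eq_sub hf hf', ← intervalIntegral.integral_of_le hab]
  exact intervalIntegral.abs_integral_le_integral_abs hab

theorem Ioc_sub_intCast_mul_eq (a h : ℝ) (n : ℤ) :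
    Ioc (a - (n + 1) * h) (a - n * h) = Ioc (a + (-n - 1) • h) (a + (-n - 1 + 1) • h) := by
  simp only [zsmul_eq_mul]; push_cast; ring_nf

theorem iUnion_Ioc_sub_intCast_mul (a : ℝ) {h : ℝ} (hh : 0 < h) :
    ⋃ n : ℤ, Ioc (a - (n + 1) * h) (a - n * h) = univ := by
  simp_rw [Ioc_sub_intCast_mul_eq]
  exact ((Equiv.neg ℤ).trans (Equiv.subRight 1)).surjective.iUnion_comp
    (fun m : ℤ => Ioc (a + m • h) (a + (m + 1) • h)) |>.trans (iUnion_Ioc_add_zsmul hh a)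

theorem pairwise_disjoint_Ioc_sub_intCast_mul (a h : ℝ) :
    Pairwise (Function.onFun Disjoint fun n : ℤ => Ioc (a - (n + 1) * h) (a - n * h)) := by
  simp_rw [Ioc_sub_intCast_mul_eq]
  exact (pairwise_disjoint_Ioc_add_zsmul a h).comp_of_injective
    ((Equiv.neg ℤ).trans (Equiv.subRight 1)).injective

theorem abs_tsum_mul_sub_le_mul_integral_abs_deriv {f : ℝ → ℝ} (hf : Differentiable ℝ f)
    (hf' : Integrable (deriv f)) {u : ℤ → ℝ} {C : ℝ} (hu : ∀ n, |u n| ≤ C) (a : ℝ) {h : ℝ}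
    (hh : 0 < h) :
    |∑' n : ℤ, u n * (f (a - n * h) - f (a - (n + 1) * h))| ≤ C * ∫ y, |deriv f y| := by
  have hcover := iUnion_Ioc_sub_intCast_mul a hh
  have hI : HasSum (fun n : ℤ => ∫ y in Ioc (a - (n + 1) * h) (a - n * h), |deriv f y|)
      (∫ y, |deriv f y|) := by
    simpa [hcover] using hasSum_integral_iUnion (fun _ => measurableSet_Ioc)
      (pairwise_disjoint_Ioc_sub_intCast_mul a h)
      (by rw [hcover]; exact hf'.abs.integrableOn)
  have hC : 0 ≤ C := (abs_nonneg _).trans (hu 0)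
  have hterm : ∀ n : ℤ, |u n * (f (a - n * h) - f (a - (n + 1) * h))| ≤
      C * ∫ y in Ioc (a - (n + 1) * h) (a - n * h), |deriv f y| := by
    intro n
    rw [abs_mul]
    gcongr
    · exact hu n
    · exact abs_sub_le_integral_Ioc_abs_deriv (by linarith) (fun y _ => hf y)
        hf'.intervalIntegrable
  have hCI := hI.mul_left C
  have habs : Summable fun n : ℤ => |u n * (f (a - n * h) - f (a - (n + 1) * h))| :=
    hCI.summable.of_nonneg_of_le (fun _ => abs_nonneg _) hterm
  calc |∑' n : ℤ, u n * (f (a - n * h) - f (a - (n + 1) * h))|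
      ≤ ∑' n : ℤ, |u n * (f (a - n * h) - f (a - (n + 1) * h))| :=
        norm_tsum_le_tsum_norm (f := fun n : ℤ => u n * (f (a - n * h) - f (a - (n + 1) * h))) habs
    _ ≤ C * ∫ y, |deriv f y| := by
        rw [← hCI.tsum_eq]; exact habs.tsum_le_tsum hterm hCI.summable

/-- Classical Fourier-domain reconstruction error bound for first-order
Sigma-Delta quantization: the low-pass-filtered first difference of the
bounded state sequence is bounded by h·‖φ′‖_{L¹}. -/
theorem stmt11 (h : ℝ) (hh : h ∈ Set.Ioo (0 : ℝ) 1)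
    (u : ℤ → ℝ) (hu : ∀ n : ℤ, |u n| ≤ 1)
    (φ : ℝ → ℝ) (hφ : ContDiff ℝ 1 φ) (hsupp : HasCompactSupport φ) :
    ∀ x : ℝ, |h * ∑' n : ℤ, (u n - u (n - 1)) * φ (x - (n : ℝ) * h)| ≤
      h * ∫ y : ℝ, |deriv φ y| := by
  intro x
  have hh0 : 0 < h := hh.1
  rw [tsum_sub_mul_eq_tsum_mul_sub u _ (hsupp.hasFiniteSupport_comp_sub_intCast_mul x hh0.ne'),
    abs_mul, abs_of_pos hh0]
  gcongr
  have hφ' : Integrable (deriv φ) :=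
    (hφ.continuous_deriv le_rfl).integrable_of_hasCompactSupport hsupp.deriv
  simpa using abs_tsum_mul_sub_le_mul_integral_abs_deriv (hφ.differentiable one_ne_zero) hφ' hu x hh0
end

section
/- Let N, K be positive integers, T > 0, τ = N·T, ω₀ = 2π/τ, a, d ∈ ℝ, b > 0. Let n₀, …, n_{K−1} ∈ {0, …, N−1} and c₀, …, c_{K−1} ∈ ℂ. Define the downchirped sparse residue sequence s(n) = exp(−i·a·(nT)²/(2b)) · Σ_{k : n_k = n} c_k for n ∈ {0, …, N−1}, and for m ∈ ℤ define its DLCT Ê(m) = T·√(ω₀·b) · Σ_{n=0}^{N−1} s(n) · (1/√(i·2πb)) · exp(i·(d·(m·ω₀·b)² − 2·(m·ω₀·b)·(nT) + a·(nT)²)/(2b)). Then the demodulated sequence f̂(m) = (√τ/(T·e^{−iπ/4})) · exp(−i·d·(m·ω₀·b)²/(2b)) · Ê(m) satisfies f̂(m) = Σ_{k=0}^{K−1} c_k · exp(−i·n_k·T·m·ω₀) for every m ∈ ℤ; i.e., f̂ is a sum of K complex exponentials whose frequencies encode the folding locations n_k. -/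
/-!
Grouping the residue by fold location writes `f̂(m)` as a sum over `n < N` of the fibre sums
`∑_{n_k = n} c_k` times one DLCT term each. In each term the three chirps cancel except for the
cross term: `exp(-i d x²/2b) · exp(-i a y²/2b) · exp(i (d x² - 2xy + a y²)/2b) = exp(-i xy/b)`,
which for `x = m ω₀ b`, `y = nT` is `exp(-i n T m ω₀)`. The constants cancel as well, because
`√τ · √(ω₀ b) = √(2π b)` and `e^{-iπ/4} e^{iπ/4} = 1`.
-/

open Finset

theorem Finset.sum_mul_comp_eq_sum_fiberwise {ι κ R : Type*} [Fintype ι] [DecidableEq κ]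
    [NonUnitalNonAssocSemiring R] {g : ι → κ} {t : Finset κ} (hg : ∀ i, g i ∈ t)
    (c : ι → R) (f : κ → R) :
    ∑ i, c i * f (g i) = ∑ j ∈ t, (∑ i with g i = j, c i) * f j := by
  rw [← sum_fiberwise_of_maps_to (fun i _ => hg i)]
  refine sum_congr rfl fun j _ => ?_
  rw [sum_mul]
  exact sum_congr rfl fun i hi => by rw [(mem_filter.mp hi).2]

theorem Complex.exp_chirp_mul_exp_chirp_mul_exp_kernel {a d b x y : ℂ} (hb : b ≠ 0) :
    exp (-I * d * x ^ 2 / (2 * b)) *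
        (exp (-I * a * y ^ 2 / (2 * b)) * exp (I * (d * x ^ 2 - 2 * x * y + a * y ^ 2) / (2 * b)))
      = exp (-I * x * y / b) := by
  rw [← Complex.exp_add, ← Complex.exp_add]
  congr 1
  field_simp
  ring

theorem dlct_normalization_eq_one {T τ ω0 b : ℝ} (hT : T ≠ 0) (hτ : 0 < τ) (hb : 0 < b)
    (hω0 : ω0 = 2 * Real.pi / τ) :
    (Real.sqrt τ : ℂ) / ((T : ℂ) * Complex.exp (-Complex.I * Real.pi / 4)) *
        ((T : ℂ) * (Real.sqrt (ω0 * b) : ℂ)) *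
        (1 / ((Real.sqrt (2 * Real.pi * b) : ℂ) * Complex.exp (Complex.I * Real.pi / 4))) = 1 := by
  have hsqrt : Real.sqrt τ * Real.sqrt (ω0 * b) = Real.sqrt (2 * Real.pi * b) := by
    rw [← Real.sqrt_mul hτ.le, hω0]
    congr 1
    field_simp
  have hsqrt_ne : (Real.sqrt (2 * Real.pi * b) : ℂ) ≠ 0 := by
    exact_mod_cast (Real.sqrt_pos.mpr (by positivity)).ne'
  have hexp : Complex.exp (-Complex.I * Real.pi / 4) * Complex.exp (Complex.I * Real.pi / 4) = 1 := by
    rw [← Complex.exp_add, neg_mul, neg_div, neg_add_cancel, Complex.exp_zero]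
  have hT' : (T : ℂ) ≠ 0 := by exact_mod_cast hT
  calc _ = ((Real.sqrt τ * Real.sqrt (ω0 * b) : ℝ) : ℂ) / (Real.sqrt (2 * Real.pi * b) : ℂ) /
        (Complex.exp (-Complex.I * Real.pi / 4) * Complex.exp (Complex.I * Real.pi / 4)) := by
          push_cast
          field_simp
    _ = 1 := by rw [hsqrt, hexp, div_self hsqrt_ne, div_one]

theorem stmt13_general (N K : ℕ) (T : ℝ) (hT : 0 < T)
    (a d b : ℝ) (hb : 0 < b)
    (τ ω0 : ℝ) (hτ : τ = (N : ℝ) * T) (hω0 : ω0 = 2 * Real.pi / τ)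
    (nk : Fin K → ℕ) (hnk : ∀ k : Fin K, nk k < N)
    (c : Fin K → ℂ)
    (s : ℕ → ℂ)
    (hs : ∀ n : ℕ, n < N →
      s n = Complex.exp (-Complex.I * a * ((n : ℝ) * T) ^ 2 / (2 * b)) *
        ∑ k ∈ Finset.univ.filter (fun k => nk k = n), c k)
    (E : ℤ → ℂ)
    (hE : ∀ m : ℤ, E m = (T : ℂ) * (Real.sqrt (ω0 * b) : ℂ) *
      ∑ n ∈ Finset.range N, s n *
        (1 / ((Real.sqrt (2 * Real.pi * b) : ℂ) * Complex.exp (Complex.I * Real.pi / 4))) *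
        Complex.exp (Complex.I *
          (d * ((m : ℝ) * ω0 * b) ^ 2 - 2 * ((m : ℝ) * ω0 * b) * ((n : ℝ) * T) +
            a * ((n : ℝ) * T) ^ 2) / (2 * b)))
    (fhat : ℤ → ℂ)
    (hfhat : ∀ m : ℤ, fhat m =
      ((Real.sqrt τ : ℂ) / ((T : ℂ) * Complex.exp (-Complex.I * Real.pi / 4))) *
        Complex.exp (-Complex.I * d * ((m : ℝ) * ω0 * b) ^ 2 / (2 * b)) * E m) :
    ∀ m : ℤ, fhat m =
      ∑ k : Fin K, c k * Complex.exp (-Complex.I * (nk k : ℝ) * T * (m : ℝ) * ω0) := by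
  intro m
  rw [sum_mul_comp_eq_sum_fiberwise (fun k => mem_range.mpr (hnk k)) c
    (fun n : ℕ => Complex.exp (-Complex.I * (n : ℝ) * T * (m : ℝ) * ω0)), hfhat, hE, mul_sum,
    mul_sum]
  refine sum_congr rfl fun n hn => ?_
  have hn : n < N := mem_range.mp hn
  have hτ0 : 0 < τ := by rw [hτ]; exact mul_pos (by exact_mod_cast n.zero_le.trans_lt hn) hT
  have hb' : (b : ℂ) ≠ 0 := by exact_mod_cast hb.ne'
  rw [hs n hn]
  calc _ = (Real.sqrt τ : ℂ) / ((T : ℂ) * Complex.exp (-Complex.I * Real.pi / 4)) *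
          ((T : ℂ) * (Real.sqrt (ω0 * b) : ℂ)) *
          (1 / ((Real.sqrt (2 * Real.pi * b) : ℂ) * Complex.exp (Complex.I * Real.pi / 4))) *
          (∑ k ∈ univ.filter (fun k => nk k = n), c k) *
          (Complex.exp (-Complex.I * d * ((m : ℝ) * ω0 * b) ^ 2 / (2 * b)) *
            (Complex.exp (-Complex.I * a * ((n : ℝ) * T) ^ 2 / (2 * b)) *
              Complex.exp (Complex.I * (d * ((m : ℝ) * ω0 * b) ^ 2 -
                2 * ((m : ℝ) * ω0 * b) * ((n : ℝ) * T) + a * ((n : ℝ) * T) ^ 2) / (2 * b)))) := by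
          ring
    _ = _ := by
      rw [dlct_normalization_eq_one hT.ne' hτ0 hb hω0, one_mul,
        Complex.exp_chirp_mul_exp_chirp_mul_exp_kernel hb']
      congr 2
      field_simp

/-- The downchirped sparse folding residue maps under the DLCT, after explicit
chirp demodulation and normalization, to a sum of K complex exponentials whose
frequencies encode the folding locations n_k. Here √(i·2πb) = √(2πb)·e^{iπ/4}
and e^{−iπ/4} = √(−i). -/
theorem stmt13 (N K : ℕ) (hN : 0 < N) (hK : 0 < K) (T : ℝ) (hT : 0 < T)
    (a d b : ℝ) (hb : 0 < b)
    (τ ω0 : ℝ) (hτ : τ = (N : ℝ) * T) (hω0 : ω0 = 2 * Real.pi / τ)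
    (nk : Fin K → ℕ) (hnk : ∀ k : Fin K, nk k < N)
    (c : Fin K → ℂ)
    (s : ℕ → ℂ)
    (hs : ∀ n : ℕ, n < N →
      s n = Complex.exp (-Complex.I * a * ((n : ℝ) * T) ^ 2 / (2 * b)) *
        ∑ k ∈ Finset.univ.filter (fun k => nk k = n), c k)
    (E : ℤ → ℂ)
    (hE : ∀ m : ℤ, E m = (T : ℂ) * (Real.sqrt (ω0 * b) : ℂ) *
      ∑ n ∈ Finset.range N, s n *
        (1 / ((Real.sqrt (2 * Real.pi * b) : ℂ) * Complex.exp (Complex.I * Real.pi / 4))) *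
        Complex.exp (Complex.I *
          (d * ((m : ℝ) * ω0 * b) ^ 2 - 2 * ((m : ℝ) * ω0 * b) * ((n : ℝ) * T) +
            a * ((n : ℝ) * T) ^ 2) / (2 * b)))
    (fhat : ℤ → ℂ)
    (hfhat : ∀ m : ℤ, fhat m =
      ((Real.sqrt τ : ℂ) / ((T : ℂ) * Complex.exp (-Complex.I * Real.pi / 4))) *
        Complex.exp (-Complex.I * d * ((m : ℝ) * ω0 * b) ^ 2 / (2 * b)) * E m) :
    ∀ m : ℤ, fhat m =
      ∑ k : Fin K, c k * Complex.exp (-Complex.I * (nk k : ℝ) * T * (m : ℝ) * ω0) :=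
  stmt13_general N K T hT a d b hb τ ω0 hτ hω0 nk hnk c s hs E hE fhat hfhat
end

section
/- Let N, M be natural numbers with 2M + 1 ≤ N and N ≥ 1, let T > 0, τ = N·T, ω₀ = 2π/τ, a, d ∈ ℝ, b > 0. Given coefficients ĝ(m) ∈ ℂ for integers m with |m| ≤ M, define g(n) = √(ω₀·b) · Σ_{|m|≤M} ĝ(m) · (1/√(−i·2πb)) · exp(−i·(a·(nT)² − 2·(nT)·(m·ω₀·b) + d·(m·ω₀·b)²)/(2b)) for n ∈ {0, …, N−1}. Then for every integer m with |m| ≤ M, T·√(ω₀·b) · Σ_{n=0}^{N−1} g(n) · (1/√(i·2πb)) · exp(i·(d·(m·ω₀·b)² − 2·(m·ω₀·b)·(nT) + a·(nT)²)/(2b)) = ĝ(m); i.e., the Discrete LCT recovers the coefficients of the inverse Discrete LCT exactly. -/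
/-!
Substituting the inverse transform, the DLCT of `g` at `m` becomes `Σ_k ĝ(k) Σ_n κ_Λ(nT, kω₀b) κ_{Λ⁻¹}(mω₀b, nT)`
up to constants. In each product the chirps in `(nT)²` cancel, leaving a phase independent of `n` times
`exp(2πi(k − m)n/N)`; as `|k − m| ≤ 2M < N`, the sum over `n` is `N·δ_{km}`. Finally `ω₀NT = 2π` makes
`T · √(ω₀b)² · N / (√(2πb)² e^{-iπ/4} e^{iπ/4})` equal to `1`.
-/

open Complex Finset
open scoped Real

theorem geom_sum_eq_zero_of_pow_eq_one {R : Type*} [CommRing R] [IsDomain R] {x : R} {N : ℕ}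
    (hxN : x ^ N = 1) (hx : x ≠ 1) : ∑ n ∈ range N, x ^ n = 0 :=
  eq_zero_of_ne_zero_of_mul_left_eq_zero (sub_ne_zero_of_ne hx.symm)
    (by rw [mul_neg_geom_sum, hxN, sub_self])

theorem sum_range_exp_two_pi_mul_I_mul_div {N : ℕ} {j : ℤ} (hj : |j| < N) :
    ∑ n ∈ range N, exp (2 * π * I * (j * n) / N) = if j = 0 then (N : ℂ) else 0 := by
  split_ifs with hj0
  · simp [hj0]
  have hN : N ≠ 0 := by rintro rfl; exact absurd hj (by simp)
  have hζ := isPrimitiveRoot_exp N hN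
  set x := exp (2 * π * I / N) ^ j
  have hterm (n : ℕ) : exp (2 * π * I * (j * n) / N) = x ^ n := by
    rw [← zpow_natCast, ← zpow_mul, ← exp_int_mul]
    congr 1
    push_cast
    ring
  have hxN : x ^ N = 1 := by
    rw [← zpow_natCast, ← zpow_mul, mul_comm j, zpow_mul, zpow_natCast, hζ.pow_eq_one, one_zpow]
  have hx : x ≠ 1 := fun h => hj0 (Int.eq_zero_of_abs_lt_dvd ((hζ.zpow_eq_one_iff_dvd j).mp h) hj)
  simp_rw [hterm]
  exact geom_sum_eq_zero_of_pow_eq_one hxN hx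

theorem sum_sum_mul_eq_of_orthogonal {R ι κ : Type*} [CommSemiring R] [DecidableEq κ]
    (s : Finset ι) (S : Finset κ) (c : κ → R) (u : κ → ι → R) (v : ι → R) {m : κ} (hm : m ∈ S)
    (horth : ∀ k ∈ S, ∑ n ∈ s, u k n * v n = if k = m then 1 else 0) :
    ∑ n ∈ s, (∑ k ∈ S, c k * u k n) * v n = c m := by
  calc ∑ n ∈ s, (∑ k ∈ S, c k * u k n) * v n
      = ∑ k ∈ S, c k * ∑ n ∈ s, u k n * v n := by
        simp_rw [sum_mul, mul_sum, mul_assoc]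
        exact sum_comm
    _ = c m := by
        rw [sum_congr rfl fun k hk => by rw [horth k hk], sum_eq_single_of_mem m hm]
        · simp
        · intro k _ hkm
          simp [hkm]

theorem one_div_sqrt_mul_exp_neg_mul_one_div_sqrt_mul_exp {x : ℝ} (hx : 0 ≤ x) (z : ℂ) :
    1 / ((√x : ℂ) * exp (-z)) * (1 / ((√x : ℂ) * exp z)) = 1 / x := by
  rw [div_mul_div_comm, one_mul, mul_mul_mul_comm, ← ofReal_mul, Real.mul_self_sqrt hx,
    ← Complex.exp_add, neg_add_cancel, Complex.exp_zero, mul_one]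

theorem dlct_normalization {N : ℕ} {T ω0 b : ℝ} (hω0 : 0 < ω0) (hb : 0 < b)
    (hperiod : ω0 * (N * T) = 2 * π) :
    (T : ℂ) * √(ω0 * b) * √(ω0 * b) * (1 / ((√(2 * π * b) : ℂ) * exp (-I * π / 4))) *
      (1 / ((√(2 * π * b) : ℂ) * exp (I * π / 4))) * N = 1 := by
  rw [mul_assoc ((T : ℂ) * _ * _), neg_mul, neg_div,
    one_div_sqrt_mul_exp_neg_mul_one_div_sqrt_mul_exp (by positivity), mul_assoc (T : ℂ),
    ← ofReal_mul, Real.mul_self_sqrt (by positivity)]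
  have : T * (ω0 * b) * (1 / (2 * π * b)) * N = 1 := by
    field_simp
    linear_combination hperiod
  exact_mod_cast this

theorem sum_range_chirp_mul_chirp {N : ℕ} {T ω0 a b d : ℝ} (hb : b ≠ 0)
    (hω0 : ω0 * (N * T) = 2 * π) {k m : ℤ} (hkm : |k - m| < N) :
    ∑ n ∈ range N,
      exp (-I * (a * ((n : ℝ) * T) ^ 2 - 2 * ((n : ℝ) * T) * ((k : ℝ) * ω0 * b) +
        d * ((k : ℝ) * ω0 * b) ^ 2) / (2 * b)) *
      exp (I * (d * ((m : ℝ) * ω0 * b) ^ 2 - 2 * ((m : ℝ) * ω0 * b) * ((n : ℝ) * T) +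
        a * ((n : ℝ) * T) ^ 2) / (2 * b)) = if k = m then (N : ℂ) else 0 := by
  have hω0C : (ω0 : ℂ) * (N * T) = 2 * π := by exact_mod_cast hω0
  have hbC : (b : ℂ) ≠ 0 := ofReal_ne_zero.mpr hb
  have hNC : (N : ℂ) ≠ 0 := Nat.cast_ne_zero.mpr (by rintro rfl; exact absurd hkm (by simp))
  have hterm (n : ℕ) :
      exp (-I * (a * ((n : ℝ) * T) ^ 2 - 2 * ((n : ℝ) * T) * ((k : ℝ) * ω0 * b) +
        d * ((k : ℝ) * ω0 * b) ^ 2) / (2 * b)) *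
      exp (I * (d * ((m : ℝ) * ω0 * b) ^ 2 - 2 * ((m : ℝ) * ω0 * b) * ((n : ℝ) * T) +
        a * ((n : ℝ) * T) ^ 2) / (2 * b)) =
      exp (I * d * (((m : ℂ) * ω0 * b) ^ 2 - ((k : ℂ) * ω0 * b) ^ 2) / (2 * b)) *
        exp (2 * π * I * (((k - m : ℤ) : ℂ) * n) / N) := by
    rw [← Complex.exp_add, ← Complex.exp_add]
    congr 1
    push_cast
    field_simp
    linear_combination (2 * (n : ℂ) * b * (k - m)) * hω0C
  simp_rw [hterm, ← mul_sum, sum_range_exp_two_pi_mul_I_mul_div hkm, sub_eq_zero]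
  split_ifs with h
  · simp [h]
  · simp

theorem stmt15_general (N M : ℕ) (hM : 2 * M + 1 ≤ N) (T : ℝ) (hT : 0 < T)
    (a d b : ℝ) (hb : 0 < b)
    (τ ω0 : ℝ) (hτ : τ = (N : ℝ) * T) (hω0 : ω0 = 2 * Real.pi / τ)
    (ghat : ℤ → ℂ) (g : ℕ → ℂ)
    (hg : ∀ n : ℕ, n < N →
      g n = (Real.sqrt (ω0 * b) : ℂ) *
        ∑ m ∈ Finset.Icc (-(M : ℤ)) (M : ℤ), ghat m *
          (1 / ((Real.sqrt (2 * Real.pi * b) : ℂ) * Complex.exp (-Complex.I * Real.pi / 4))) *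
          Complex.exp (-Complex.I *
            (a * ((n : ℝ) * T) ^ 2 - 2 * ((n : ℝ) * T) * ((m : ℝ) * ω0 * b) +
              d * ((m : ℝ) * ω0 * b) ^ 2) / (2 * b))) :
    ∀ m : ℤ, |m| ≤ (M : ℤ) →
      (T : ℂ) * (Real.sqrt (ω0 * b) : ℂ) *
        ∑ n ∈ Finset.range N, g n *
          (1 / ((Real.sqrt (2 * Real.pi * b) : ℂ) * Complex.exp (Complex.I * Real.pi / 4))) *
          Complex.exp (Complex.I *
            (d * ((m : ℝ) * ω0 * b) ^ 2 - 2 * ((m : ℝ) * ω0 * b) * ((n : ℝ) * T) +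
              a * ((n : ℝ) * T) ^ 2) / (2 * b)) = ghat m := by
  intro m hm
  have hN : (0 : ℝ) < N := by exact_mod_cast (by omega : 0 < N)
  have hperiod : ω0 * (N * T) = 2 * π := by rw [hω0, hτ]; field_simp
  set B : ℂ := (√(ω0 * b) : ℂ)
  set c : ℂ := 1 / ((√(2 * π * b) : ℂ) * exp (-I * π / 4))
  set c' : ℂ := 1 / ((√(2 * π * b) : ℂ) * exp (I * π / 4))
  have hmS : m ∈ Icc (-(M : ℤ)) M := mem_Icc.mpr (abs_le.mp hm)
  have hexpand : (T : ℂ) * B * ∑ n ∈ range N, g n * c' *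
        exp (I * (d * ((m : ℝ) * ω0 * b) ^ 2 - 2 * ((m : ℝ) * ω0 * b) * ((n : ℝ) * T) +
          a * ((n : ℝ) * T) ^ 2) / (2 * b)) =
      ∑ n ∈ range N, (∑ k ∈ Icc (-(M : ℤ)) M, ghat k * (B * c *
          exp (-I * (a * ((n : ℝ) * T) ^ 2 - 2 * ((n : ℝ) * T) * ((k : ℝ) * ω0 * b) +
            d * ((k : ℝ) * ω0 * b) ^ 2) / (2 * b)))) *
        (T * B * c' *
          exp (I * (d * ((m : ℝ) * ω0 * b) ^ 2 - 2 * ((m : ℝ) * ω0 * b) * ((n : ℝ) * T) +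
            a * ((n : ℝ) * T) ^ 2) / (2 * b))) := by
    rw [mul_sum]
    refine sum_congr rfl fun n hn => ?_
    rw [hg n (mem_range.mp hn), mul_sum, sum_mul, sum_mul, sum_mul, mul_sum]
    exact sum_congr rfl fun k _ => by ring
  rw [hexpand]
  refine sum_sum_mul_eq_of_orthogonal _ _ _ _ _ hmS fun k hk => ?_
  have hkm : |k - m| < N := by
    obtain ⟨_, _⟩ := mem_Icc.mp hk
    obtain ⟨_, _⟩ := mem_Icc.mp hmS
    exact abs_lt.mpr ⟨by omega, by omega⟩
  simp only [mul_mul_mul_comm (B * c) (exp _)]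
  rw [← mul_sum, sum_range_chirp_mul_chirp hb.ne' hperiod hkm]
  split_ifs
  · linear_combination dlct_normalization (by rw [hω0, hτ]; positivity) hb hperiod
  · rw [mul_zero]

/-- The Discrete LCT recovers the coefficients of the inverse Discrete LCT
exactly whenever 2M + 1 ≤ N. Here √(i·2πb) = √(2πb)·e^{iπ/4} and
√(−i·2πb) = √(2πb)·e^{−iπ/4}. -/
theorem stmt15 (N M : ℕ) (hN : 1 ≤ N) (hM : 2 * M + 1 ≤ N) (T : ℝ) (hT : 0 < T)
    (a d b : ℝ) (hb : 0 < b)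
    (τ ω0 : ℝ) (hτ : τ = (N : ℝ) * T) (hω0 : ω0 = 2 * Real.pi / τ)
    (ghat : ℤ → ℂ) (g : ℕ → ℂ)
    (hg : ∀ n : ℕ, n < N →
      g n = (Real.sqrt (ω0 * b) : ℂ) *
        ∑ m ∈ Finset.Icc (-(M : ℤ)) (M : ℤ), ghat m *
          (1 / ((Real.sqrt (2 * Real.pi * b) : ℂ) * Complex.exp (-Complex.I * Real.pi / 4))) *
          Complex.exp (-Complex.I *
            (a * ((n : ℝ) * T) ^ 2 - 2 * ((n : ℝ) * T) * ((m : ℝ) * ω0 * b) +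
              d * ((m : ℝ) * ω0 * b) ^ 2) / (2 * b))) :
    ∀ m : ℤ, |m| ≤ (M : ℤ) →
      (T : ℂ) * (Real.sqrt (ω0 * b) : ℂ) *
        ∑ n ∈ Finset.range N, g n *
          (1 / ((Real.sqrt (2 * Real.pi * b) : ℂ) * Complex.exp (Complex.I * Real.pi / 4))) *
          Complex.exp (Complex.I *
            (d * ((m : ℝ) * ω0 * b) ^ 2 - 2 * ((m : ℝ) * ω0 * b) * ((n : ℝ) * T) +
              a * ((n : ℝ) * T) ^ 2) / (2 * b)) = ghat m :=
  stmt15_general N M hM T hT a d b hb τ ω0 hτ hω0 ghat g hg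
end
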